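/- arXiv:1906.10812 — 4 statements merged into one kernel-verified Lean document; each statement's English description precedes it below -/
import Mathlib

section
/- The box spline depends on its direction vectors only up to reordering: if (w₁, …, wₙ) is a permutation of (v₁, …, vₙ) such that w₁, …, w_d are also linearly independent, then M_{w₁,…,wₙ}(x) = M_{v₁,…,vₙ}(x) for Lebesgue-almost every x ∈ ℝ^d. -/
/-!
The box spline `M_v` is the Lebesgue density of the law of `∑ tᵢ vᵢ` with `t` uniform on the unit
cube, that is, of the convolution of the uniform measures on the segments `[0, vᵢ]`. For `d`
linearly independent vectors this is a linear change of variables from the cube; each further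
vector convolves the density with a segment measure, which is exactly the integral in the
recursive definition. Convolution of finite measures is commutative and associative, so this
measure does not depend on the order of the vectors, and a density is unique almost everywhere.
-/

open MeasureTheory

open scoped Classical in
/-- The box spline `M_{v₁,…,vₙ}` with direction vectors given by the list `v` in `ℝ^d`
(represented as `Fin d → ℝ`), defined recursively: when the list has length `≤ d`
(base case, length `= d` in intended use) it is the normalized indicator of the
parallelepiped spanned by the first `d` vectors, scaled by `1/|det[v₁ ⋯ v_d]|`;
otherwise one integrates out the last direction vector over `[0,1]`. -/
noncomputable def boxSpline (d : ℕ) (v : List (Fin d → ℝ)) : (Fin d → ℝ) → ℝ :=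
  if _h : v.length ≤ d then
    fun x =>
      if ∃ t : Fin d → ℝ, (∀ k, t k ∈ Set.Icc (0 : ℝ) 1) ∧ x = ∑ k, t k • v.getD k.val 0 then
        |Matrix.det (Matrix.of fun i j : Fin d => v.getD j.val 0 i)|⁻¹
      else 0
  else
    fun x => ∫ t in (0 : ℝ)..1, boxSpline d v.dropLast (x - t • v.getLastD 0)
termination_by v.length
decreasing_by
  simp only [List.length_dropLast]
  omega

open Set Measure
open scoped ENNReal

@[elab_as_elim]
theorem List.concat_induction_of_length_le {α : Type*} (d : ℕ) {P : List α → Prop}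
    (base : ∀ v : List α, v.length ≤ d → P v)
    (concat : ∀ (v : List α) (a : α), d ≤ v.length → P v → P (v ++ [a])) (v : List α) : P v := by
  induction v using List.reverseRecOn with
  | nil => exact base [] (Nat.zero_le d)
  | append_singleton v a ih =>
    by_cases h : d ≤ v.length
    · exact concat v a h ih
    · exact base _ (by simp only [List.length_append, List.length_singleton]; omega)

theorem List.le_length_of_linearIndependent_getD {R M : Type*} [Ring R] [Nontrivial R]
    [AddCommGroup M] [Module R M] {d : ℕ} {v : List M}
    (h : LinearIndependent R fun i : Fin d => v.getD i 0) : d ≤ v.length := by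
  by_contra! hlt
  exact h.ne_zero ⟨v.length, hlt⟩ (List.getD_eq_default _ _ le_rfl)

theorem MeasureTheory.Measure.conv_left_comm {M : Type*} [AddCommMonoid M] [MeasurableSpace M]
    [MeasurableAdd₂ M] (μ ν ρ : Measure M) [SFinite μ] [SFinite ν] [SFinite ρ] :
    μ ∗ (ν ∗ ρ) = ν ∗ (μ ∗ ρ) := by
  rw [← conv_assoc, conv_comm μ ν, conv_assoc]

theorem MeasureTheory.Measure.conv_withDensity_eq {G : Type*} [AddCommGroup G] [MeasurableSpace G]
    [MeasurableAdd₂ G] [MeasurableNeg G] (μ ν : Measure G) [SFinite μ] [SFinite ν]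
    [IsAddRightInvariant ν] {g : G → ℝ≥0∞} (hg : Measurable g) :
    μ ∗ ν.withDensity g = ν.withDensity fun x => ∫⁻ y, g (x - y) ∂μ := by
  have hconv : Measurable fun x => ∫⁻ y, g (x - y) ∂μ :=
    (hg.comp measurable_sub).lintegral_prod_right'
  refine ext_of_lintegral _ fun f hf => ?_
  calc ∫⁻ z, f z ∂(μ ∗ ν.withDensity g)
      = ∫⁻ y, ∫⁻ z, g z * f (y + z) ∂ν ∂μ := by
        rw [lintegral_conv hf]
        exact lintegral_congr fun y => lintegral_withDensity_eq_lintegral_mul _ hg (by fun_prop)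
    _ = ∫⁻ y, ∫⁻ x, g (x - y) * f x ∂ν ∂μ := by
        refine lintegral_congr fun y => ?_
        rw [← lintegral_sub_right_eq_self _ y]
        simp
    _ = ∫⁻ x, (∫⁻ y, g (x - y) ∂μ) * f x ∂ν := by
        rw [lintegral_lintegral_swap (by fun_prop)]
        exact lintegral_congr fun x => lintegral_mul_const _ (by fun_prop)
    _ = ∫⁻ x, f x ∂ν.withDensity fun x => ∫⁻ y, g (x - y) ∂μ :=
        (lintegral_withDensity_eq_lintegral_mul _ hconv hf).symm

section BoxMeasure

variable {E : Type*} [AddCommMonoid E] [Module ℝ E] [MeasurableSpace E] [MeasurableSMul₂ ℝ E]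

noncomputable def segmentMeasure (a : E) : Measure E :=
  (volume.restrict (Icc (0 : ℝ) 1)).map (· • a)

instance (a : E) : IsProbabilityMeasure (segmentMeasure a) :=
  have : IsProbabilityMeasure (volume.restrict (Icc (0 : ℝ) 1)) := ⟨by simp⟩
  isProbabilityMeasure_map (by fun_prop)

theorem lintegral_segmentMeasure (a : E) {f : E → ℝ≥0∞} (hf : Measurable f) :
    ∫⁻ y, f y ∂segmentMeasure a = ∫⁻ t in Icc (0 : ℝ) 1, f (t • a) :=
  lintegral_map hf (by fun_prop)

variable [MeasurableAdd₂ E]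

noncomputable def boxMeasure : List E → Measure E
  | [] => dirac 0
  | a :: v => segmentMeasure a ∗ boxMeasure v

instance (v : List E) : IsProbabilityMeasure (boxMeasure v) := by
  induction v with
  | nil => rw [boxMeasure]; infer_instance
  | cons a v ih => rw [boxMeasure]; infer_instance

theorem boxMeasure_concat (v : List E) (a : E) :
    boxMeasure (v ++ [a]) = segmentMeasure a ∗ boxMeasure v := by
  induction v with
  | nil => rfl
  | cons b v ih => rw [List.cons_append, boxMeasure, ih, boxMeasure, conv_left_comm]

theorem List.Perm.boxMeasure_eq {v w : List E} (h : v.Perm w) : boxMeasure v = boxMeasure w := by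
  induction h with
  | nil => rfl
  | cons a _ ih => rw [boxMeasure, ih, boxMeasure]
  | swap a b v => simp only [boxMeasure]; exact conv_left_comm _ _ _
  | trans _ _ ih₁ ih₂ => rw [ih₁, ih₂]

theorem boxMeasure_eq_map {n : ℕ} {v : List E} (hn : v.length = n) :
    boxMeasure v = (Measure.pi fun _ : Fin n => volume.restrict (Icc (0 : ℝ) 1)).map
      fun t => ∑ i : Fin n, t i • v.getD i 0 := by
  induction v generalizing n with
  | nil =>
    subst hn
    simp [boxMeasure]
  | cons a v ih =>
    rw [List.length_cons] at hn
    subst hn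
    have hsplit := (measurePreserving_piFinSuccAbove
      (fun _ : Fin (v.length + 1) => volume.restrict (Icc (0 : ℝ) 1)) 0).symm
    rw [boxMeasure, ← hsplit.map_eq, map_map (by fun_prop) (by fun_prop), ih rfl, segmentMeasure,
      conv, map_prod_map _ _ (by fun_prop) (by fun_prop), map_map (by fun_prop) (by fun_prop)]
    congr 1
    ext p
    simp [Fin.sum_univ_succ]

end BoxMeasure

section BoxSpline

variable {d : ℕ}

theorem boxSpline_of_length_le {v : List (Fin d → ℝ)} (h : v.length ≤ d) :
    boxSpline d v = (parallelepiped fun i : Fin d => v.getD i 0).indicator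
      fun _ => |(Matrix.of fun i j : Fin d => v.getD j 0 i).det|⁻¹ := by
  classical
  ext x
  have hmem : (∃ t : Fin d → ℝ, (∀ k, t k ∈ Icc (0 : ℝ) 1) ∧ x = ∑ k, t k • v.getD k 0) ↔
      x ∈ parallelepiped fun i : Fin d => v.getD i 0 := by
    rw [mem_parallelepiped_iff, ← pi_univ_Icc]
    simp only [mem_univ_pi, Pi.zero_apply, Pi.one_apply]
  rw [boxSpline, dif_pos h, indicator_apply]
  exact if_congr hmem rfl rfl

theorem boxSpline_concat {v : List (Fin d → ℝ)} (h : d ≤ v.length) (a x : Fin d → ℝ) :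
    boxSpline d (v ++ [a]) x = ∫ t in (0 : ℝ)..1, boxSpline d v (x - t • a) := by
  rw [boxSpline, dif_neg (by simp only [List.length_append, List.length_singleton]; omega)]
  simp

theorem boxSpline_nonneg (v : List (Fin d → ℝ)) (x : Fin d → ℝ) : 0 ≤ boxSpline d v x := by
  induction v using List.concat_induction_of_length_le d generalizing x with
  | base v hv =>
    rw [boxSpline_of_length_le hv]
    exact indicator_nonneg (fun _ _ => by positivity) x
  | concat v a hv ih =>
    rw [boxSpline_concat hv]
    exact intervalIntegral.integral_nonneg zero_le_one fun t _ => ih _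

@[fun_prop]
theorem measurable_boxSpline (v : List (Fin d → ℝ)) : Measurable (boxSpline d v) := by
  induction v using List.concat_induction_of_length_le d with
  | base v hv =>
    rw [boxSpline_of_length_le hv]
    exact measurable_const.indicator
      (isCompact_Icc.image (by fun_prop)).isClosed.measurableSet
  | concat v a hv ih =>
    simp_rw [funext (boxSpline_concat hv a), intervalIntegral.integral_of_le zero_le_one]
    exact (ih.comp (by fun_prop : Measurable fun p : (Fin d → ℝ) × ℝ => p.1 - p.2 • a)
      ).stronglyMeasurable.integral_prod_right'.measurable

theorem boxSpline_le (v : List (Fin d → ℝ)) (x : Fin d → ℝ) :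
    boxSpline d v x ≤ |(Matrix.of fun i j : Fin d => v.getD j 0 i).det|⁻¹ := by
  induction v using List.concat_induction_of_length_le d generalizing x with
  | base v hv =>
    rw [boxSpline_of_length_le hv]
    exact indicator_le_self' (fun _ _ => by positivity) x
  | concat v a hv ih =>
    have hcols : ∀ j : Fin d, (v ++ [a]).getD j 0 = v.getD j 0 := fun j =>
      List.getD_append _ _ _ _ (by omega)
    simp only [hcols]
    calc boxSpline d (v ++ [a]) x ≤ ‖∫ t in (0 : ℝ)..1, boxSpline d v (x - t • a)‖ := by
          rw [boxSpline_concat hv]; exact Real.le_norm_self _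
      _ ≤ |(Matrix.of fun i j : Fin d => v.getD j 0 i).det|⁻¹ * |1 - 0| := by
          refine intervalIntegral.norm_integral_le_of_norm_le_const fun t _ => ?_
          rw [Real.norm_of_nonneg (boxSpline_nonneg _ _)]
          exact ih _
      _ = _ := by simp

theorem intervalIntegrable_boxSpline_sub_smul (v : List (Fin d → ℝ)) (a x : Fin d → ℝ) :
    IntervalIntegrable (fun t : ℝ => boxSpline d v (x - t • a)) volume 0 1 := by
  rw [intervalIntegrable_iff_integrableOn_Ioc_of_le zero_le_one]
  refine Measure.integrableOn_of_bounded (M := |(Matrix.of fun i j : Fin d => v.getD j 0 i).det|⁻¹)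
    (by simp) (by fun_prop : Measurable _).aestronglyMeasurable
    (ae_of_all _ fun t => ?_)
  rw [Real.norm_of_nonneg (boxSpline_nonneg _ _)]
  exact boxSpline_le v _

theorem ofReal_boxSpline_concat {v : List (Fin d → ℝ)} (h : d ≤ v.length) (a x : Fin d → ℝ) :
    ENNReal.ofReal (boxSpline d (v ++ [a]) x) =
      ∫⁻ t in Icc (0 : ℝ) 1, ENNReal.ofReal (boxSpline d v (x - t • a)) := by
  rw [boxSpline_concat h, intervalIntegral.integral_of_le zero_le_one,
    ofReal_integral_eq_lintegral_ofReal (intervalIntegrable_boxSpline_sub_smul v a x).1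
      (ae_of_all _ fun _ => boxSpline_nonneg _ _), restrict_congr_set Ioc_ae_eq_Icc]

theorem boxMeasure_eq_withDensity_of_length_eq {v : List (Fin d → ℝ)} (hv : v.length = d)
    (hli : LinearIndependent ℝ fun i : Fin d => v.getD i 0) :
    boxMeasure v = volume.withDensity fun x => ENNReal.ofReal (boxSpline d v x) := by
  classical
  set M := Matrix.of fun i j : Fin d => v.getD j 0 i
  set T := fun t : Fin d → ℝ => ∑ i, t i • v.getD i 0
  have hTM : T = Matrix.toLin' M := by
    ext t i
    simp [T, M, Matrix.mulVec, dotProduct, mul_comm]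
  have hdet : M.det ≠ 0 :=
    (M.isUnit_iff_isUnit_det.mp (Matrix.linearIndependent_cols_iff_isUnit.mp hli)).ne_zero
  have hT : Measurable T := by fun_prop
  have hTinj : Function.Injective T := by
    rw [hTM]
    exact (Matrix.mulVec_injective_iff_isUnit.mpr (M.isUnit_iff_isUnit_det.mpr hdet.isUnit))
  set P := parallelepiped fun i : Fin d => v.getD i 0
  have hTP : T '' Icc 0 1 = P := rfl
  have hP : MeasurableSet P := (isCompact_Icc.image (by fun_prop)).isClosed.measurableSet
  have hcube : (Measure.pi fun _ : Fin d => volume.restrict (Icc (0 : ℝ) 1)) =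
      volume.restrict (Icc 0 1) := by
    rw [← restrict_pi_pi, pi_univ_Icc]; rfl
  have hbox : (fun x => ENNReal.ofReal (boxSpline d v x)) =
      P.indicator fun _ => ENNReal.ofReal |M.det|⁻¹ := by
    ext x
    rw [boxSpline_of_length_le hv.le, indicator_apply, indicator_apply]
    split_ifs
    exacts [rfl, ENNReal.ofReal_zero]
  calc boxMeasure v = (volume.restrict (Icc 0 1)).map T := by rw [boxMeasure_eq_map hv, hcube]
    _ = (volume.map T).restrict P := by
      rw [restrict_map hT hP, ← hTP, hTinj.preimage_image]
    _ = ENNReal.ofReal |M.det|⁻¹ • volume.restrict P := by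
      rw [hTM, Real.map_matrix_volume_pi_eq_smul_volume_pi hdet, restrict_smul, abs_inv]
    _ = _ := by rw [hbox, withDensity_indicator hP, withDensity_const]

theorem boxMeasure_eq_withDensity_boxSpline {v : List (Fin d → ℝ)}
    (hli : LinearIndependent ℝ fun i : Fin d => v.getD i 0) :
    boxMeasure v = volume.withDensity fun x => ENNReal.ofReal (boxSpline d v x) := by
  induction v using List.concat_induction_of_length_le d with
  | base v hv =>
    exact boxMeasure_eq_withDensity_of_length_eq
      (hv.antisymm (List.le_length_of_linearIndependent_getD hli)) hli
  | concat v a hv ih =>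
    have hcols : (fun i : Fin d => (v ++ [a]).getD i 0) = fun i : Fin d => v.getD i 0 :=
      funext fun i => List.getD_append _ _ _ _ (by omega)
    rw [hcols] at hli
    rw [boxMeasure_concat, ih hli, conv_withDensity_eq _ _ (by fun_prop)]
    congr 1 with x
    rw [ofReal_boxSpline_concat hv, lintegral_segmentMeasure a (by fun_prop)]

end BoxSpline

theorem boxSpline_perm_general
    (d : ℕ)
    (v : List (Fin d → ℝ))
    (hli : LinearIndependent ℝ (fun i : Fin d => v.getD i.val 0))
    (w : List (Fin d → ℝ)) (hperm : v.Perm w)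
    (hliw : LinearIndependent ℝ (fun i : Fin d => w.getD i.val 0)) :
    ∀ᵐ x : Fin d → ℝ ∂volume, boxSpline d w x = boxSpline d v x := by
  have hdensity : (volume.withDensity fun x => ENNReal.ofReal (boxSpline d w x)) =
      volume.withDensity fun x => ENNReal.ofReal (boxSpline d v x) := by
    rw [← boxMeasure_eq_withDensity_boxSpline hli, ← boxMeasure_eq_withDensity_boxSpline hliw,
      hperm.boxMeasure_eq]
  filter_upwards [(withDensity_eq_iff_of_sigmaFinite (by fun_prop) (by fun_prop)).mp hdensity]
    with x hx
  exact (ENNReal.ofReal_eq_ofReal_iff (boxSpline_nonneg w x) (boxSpline_nonneg v x)).mp hx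

/-- The box spline depends on its direction vectors only up to reordering:
if `(w₁,…,wₙ)` is a permutation of `(v₁,…,vₙ)` such that `w₁,…,w_d` are also linearly
independent, then `M_{w₁,…,wₙ} = M_{v₁,…,vₙ}` Lebesgue-almost everywhere. -/
theorem boxSpline_perm
    (d n : ℕ) (hd : 1 ≤ d) (hdn : d ≤ n)
    (v : List (Fin d → ℝ)) (hlen : v.length = n)
    (hli : LinearIndependent ℝ (fun i : Fin d => v.getD i.val 0))
    (w : List (Fin d → ℝ)) (hperm : v.Perm w)
    (hliw : LinearIndependent ℝ (fun i : Fin d => w.getD i.val 0)) :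
    ∀ᵐ x : Fin d → ℝ ∂volume, boxSpline d w x = boxSpline d v x :=
  boxSpline_perm_general d v hli w hperm hliw
end

section
/- Suppose n > d and that the box spline M_{v₁,…,v_{n−1}} (obtained by deleting the last direction vector) is continuous and bounded on ℝ^d. Then for every x ∈ ℝ^d the box spline M_{v₁,…,vₙ} has directional derivative along vₙ at x, and D_{vₙ} M_{v₁,…,vₙ}(x) = M_{v₁,…,v_{n−1}}(x) − M_{v₁,…,v_{n−1}}(x − vₙ). -/
/-!
The substitution `u = s - t` writes `M_{v₁,…,vₙ}(x + s vₙ)` as `∫_{s-1}^{s} M_{v₁,…,v_{n−1}}(x + u vₙ) du`,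
an integral of a continuous function over an interval whose endpoints move with unit speed,
so the fundamental theorem of calculus gives the derivative.
-/

open MeasureTheory

theorem Continuous.hasDerivAt_integral_comp_sub {E : Type*} [NormedAddCommGroup E]
    [NormedSpace ℝ E] [CompleteSpace E] {h : ℝ → E} (hh : Continuous h) (a b s : ℝ) :
    HasDerivAt (fun s => ∫ t in a..b, h (s - t)) (h (s - a) - h (s - b)) s := by
  have hprim (c : ℝ) : HasDerivAt (fun s => ∫ u in (0 : ℝ)..s - c, h u) (h (s - c)) s :=
    (hh.integral_hasStrictDerivAt 0 (s - c)).hasDerivAt.comp_sub_const s c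
  have hsplit (s : ℝ) : ∫ t in a..b, h (s - t) =
      (∫ u in (0 : ℝ)..s - a, h u) - ∫ u in (0 : ℝ)..s - b, h u := by
    rw [intervalIntegral.integral_comp_sub_left,
      intervalIntegral.integral_interval_sub_left (hh.intervalIntegrable _ _)
        (hh.intervalIntegrable _ _)]
  simpa only [hsplit] using (hprim a).fun_sub (hprim b)

theorem boxSpline_of_length_gt {d : ℕ} {v : List (Fin d → ℝ)} (hv : d < v.length)
    (x : Fin d → ℝ) :
    boxSpline d v x = ∫ t in (0 : ℝ)..1, boxSpline d v.dropLast (x - t • v.getLastD 0) := by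
  rw [boxSpline, dif_neg hv.not_ge]

theorem boxSpline_directional_deriv_last_general
    (d n : ℕ) (hdn : d < n)
    (v : List (Fin d → ℝ)) (hlen : v.length = n)
    (hcont : Continuous (boxSpline d v.dropLast)) :
    ∀ x : Fin d → ℝ,
      HasDerivAt (fun s : ℝ => boxSpline d v (x + s • v.getLastD 0))
        (boxSpline d v.dropLast x - boxSpline d v.dropLast (x - v.getLastD 0)) 0 := by
  intro x
  set w := v.getLastD 0
  set h : ℝ → ℝ := fun u => boxSpline d v.dropLast (x + u • w)
  have hh : Continuous h := by fun_prop
  have hshift (s : ℝ) : boxSpline d v (x + s • w) = ∫ t in (0 : ℝ)..1, h (s - t) := by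
    rw [boxSpline_of_length_gt (hlen ▸ hdn)]
    congr with t
    simp only [h, w, sub_smul, add_sub_assoc]
  have hx : x - w = x + (0 - 1 : ℝ) • w := by module
  simpa only [hshift, h, sub_zero, zero_smul, add_zero, ← hx]
    using hh.hasDerivAt_integral_comp_sub 0 1 0

/-- Suppose `n > d` and that the box spline `M_{v₁,…,v_{n−1}}` (obtained by
deleting the last direction vector) is continuous and bounded on `ℝ^d`. Then for every
`x` the box spline `M_{v₁,…,vₙ}` has directional derivative along `vₙ` at `x`, equal to
`M_{v₁,…,v_{n−1}}(x) − M_{v₁,…,v_{n−1}}(x − vₙ)`. -/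
theorem boxSpline_directional_deriv_last
    (d n : ℕ) (hd : 1 ≤ d) (hdn : d < n)
    (v : List (Fin d → ℝ)) (hlen : v.length = n)
    (hli : LinearIndependent ℝ (fun i : Fin d => v.getD i.val 0))
    (hcont : Continuous (boxSpline d v.dropLast))
    (hbd : ∃ C : ℝ, ∀ x, |boxSpline d v.dropLast x| ≤ C) :
    ∀ x : Fin d → ℝ,
      HasDerivAt (fun s : ℝ => boxSpline d v (x + s • v.getLastD 0))
        (boxSpline d v.dropLast x - boxSpline d v.dropLast (x - v.getLastD 0)) 0 :=
  boxSpline_directional_deriv_last_general d n hdn v hlen hcont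
end

section
/- Let E = (v₁, …, vₙ) and F = (w₁, …, w_m) be two lists of vectors in ℝ^d with n ≥ d, m ≥ d, such that v₁, …, v_d are linearly independent and w₁, …, w_d are linearly independent. Then the box spline of the concatenated list E ++ F = (v₁, …, vₙ, w₁, …, w_m) equals the convolution of the two box splines: for Lebesgue-almost every x ∈ ℝ^d, M_{E++F}(x) = ∫_{ℝ^d} M_E(x − y) · M_F(y) dy. -/
/-!
Peeling the vectors `t₁, …, tₙ` of a list `T` off one at a time, `M_{E++T}(x)` is the integral of
`M_E(x - ∑ sₖ tₖ)` over the unit cube `[0,1]ⁿ`. When `F` has exactly `d` vectors, `M_F` is the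
normalised indicator of the parallelepiped they span, so the linear change of variables
`y = ∑ sₖ wₖ` turns this cube integral into `∫ M_E(x - y) M_F(y) dy`. Each further vector `w` of
`F` adds an integral over `s ∈ [0,1]` to both sides, and Tonelli together with translation
invariance of Lebesgue measure matches them. Everything is done for `ofReal ∘ M` in `ℝ≥0∞`, where
Tonelli needs no integrability; measurability and boundedness of `M` are only needed to pass
back to Bochner integrals.
-/

open MeasureTheory

open scoped ENNReal

theorem List.induction_of_length_le {α : Type*} (d : ℕ) {motive : List α → Prop}
    (short : ∀ v, v.length ≤ d → motive v)
    (append_singleton : ∀ l w, d ≤ l.length → motive l → motive (l ++ [w])) (v : List α) :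
    motive v := by
  induction v using List.reverseRecOn with
  | nil => exact short [] (Nat.zero_le d)
  | append_singleton l w ih =>
    by_cases hl : d ≤ l.length
    · exact append_singleton l w hl ih
    · exact short _ (by simp only [List.length_append, List.length_singleton]; omega)

theorem setLIntegral_parallelepiped {ι : Type*} [Fintype ι] [DecidableEq ι] {b : ι → ι → ℝ}
    (hb : LinearIndependent ℝ b) (g : (ι → ℝ) → ℝ≥0∞) :
    ∫⁻ y in parallelepiped b, g y =
      ENNReal.ofReal |(Matrix.of fun i j => b j i).det| *
        ∫⁻ t in Set.Icc (0 : ι → ℝ) 1, g (∑ k, t k • b k) := by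
  set M : Matrix ι ι ℝ := Matrix.of fun i j => b j i
  set L := LinearMap.toContinuousLinearMap (Matrix.toLin' M)
  have hL : ∀ t, L t = ∑ k, t k • b k := fun t => by
    ext i; simp [L, M, Matrix.mulVec, dotProduct, mul_comm]
  have hinj : Function.Injective L :=
    Matrix.mulVec_injective_iff_isUnit.2 (Matrix.linearIndependent_cols_iff_isUnit.1 hb)
  have himage : parallelepiped b = L '' Set.Icc 0 1 := by
    simp only [parallelepiped, ← hL]
  rw [himage, lintegral_image_eq_lintegral_abs_det_fderiv_mul volume measurableSet_Icc
    (fun t _ => L.hasFDerivWithinAt) hinj.injOn,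
    lintegral_const_mul' _ _ ENNReal.ofReal_ne_top]
  simp [L, hL]

theorem isCompact_parallelepiped {ι E : Type*} [Fintype ι] [AddCommGroup E] [Module ℝ E]
    [TopologicalSpace E] [IsTopologicalAddGroup E] [ContinuousSMul ℝ E] (v : ι → E) :
    IsCompact (parallelepiped v) :=
  isCompact_Icc.image (by fun_prop)

theorem MeasureTheory.Measure.pi_volume_restrict_Icc {ι : Type*} [Fintype ι] (a b : ι → ℝ) :
    (Measure.pi fun i => volume.restrict (Set.Icc (a i) (b i))) =
      volume.restrict (Set.Icc a b) := by
  rw [← Measure.restrict_pi_pi, Set.pi_univ_Icc, volume_pi]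

namespace boxSpline

variable {d : ℕ}

theorem of_length_le {v : List (Fin d → ℝ)} (hv : v.length ≤ d) :
    boxSpline d v = (parallelepiped fun k : Fin d => v.getD k 0).indicator
      fun _ => |(Matrix.of fun i j : Fin d => v.getD j.val 0 i).det|⁻¹ := by
  classical
  ext x
  rw [boxSpline, dif_pos hv, Set.indicator_apply]
  simp only [mem_parallelepiped_iff, Set.mem_Icc, Pi.le_def, ← forall_and]
  rfl

theorem append_singleton {l : List (Fin d → ℝ)} (hl : d ≤ l.length) (w x : Fin d → ℝ) :
    boxSpline d (l ++ [w]) x = ∫ t in (0 : ℝ)..1, boxSpline d l (x - t • w) := by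
  rw [boxSpline, dif_neg (by simp only [List.length_append, List.length_singleton]; omega),
    List.dropLast_concat, List.getLastD_concat]

theorem measurable (v : List (Fin d → ℝ)) : Measurable (boxSpline d v) := by
  induction v using List.induction_of_length_le d with
  | short v hv =>
    rw [of_length_le hv]
    exact measurable_const.indicator (isCompact_parallelepiped _).measurableSet
  | append_singleton l w hl ih =>
    simp_rw [funext (append_singleton hl w), intervalIntegral.integral_of_le zero_le_one]
    refine StronglyMeasurable.measurable (StronglyMeasurable.integral_prod_right ?_)
    exact (ih.comp (by fun_prop)).stronglyMeasurable

theorem nonneg (v : List (Fin d → ℝ)) (x : Fin d → ℝ) : 0 ≤ boxSpline d v x := by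
  induction v using List.induction_of_length_le d generalizing x with
  | short v hv =>
    rw [of_length_le hv]
    exact Set.indicator_nonneg (fun _ _ => inv_nonneg.2 (abs_nonneg _)) x
  | append_singleton l w hl ih =>
    rw [append_singleton hl]
    exact intervalIntegral.integral_nonneg zero_le_one fun t _ => ih _

theorem exists_forall_le (v : List (Fin d → ℝ)) : ∃ C, ∀ x, boxSpline d v x ≤ C := by
  induction v using List.induction_of_length_le d with
  | short v hv =>
    refine ⟨|(Matrix.of fun i j : Fin d => v.getD j.val 0 i).det|⁻¹, fun x => ?_⟩
    rw [of_length_le hv]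
    exact Set.indicator_le_self' (fun _ _ => inv_nonneg.2 (abs_nonneg _)) x
  | append_singleton l w hl ih =>
    obtain ⟨C, hC⟩ := ih
    refine ⟨C, fun x => ?_⟩
    calc boxSpline d (l ++ [w]) x ≤ ‖∫ t in (0 : ℝ)..1, boxSpline d l (x - t • w)‖ := by
          rw [append_singleton hl]; exact Real.le_norm_self _
      _ ≤ C * |1 - 0| := intervalIntegral.norm_integral_le_of_norm_le_const fun t _ => by
          rw [Real.norm_of_nonneg (nonneg l _)]; exact hC _
      _ = C := by norm_num

theorem ofReal_append_singleton {l : List (Fin d → ℝ)} (hl : d ≤ l.length) (w x : Fin d → ℝ) :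
    ENNReal.ofReal (boxSpline d (l ++ [w]) x) =
      ∫⁻ t in Set.Icc (0 : ℝ) 1, ENNReal.ofReal (boxSpline d l (x - t • w)) := by
  obtain ⟨C, hC⟩ := exists_forall_le l
  have hmeas : Measurable fun t : ℝ => boxSpline d l (x - t • w) :=
    (measurable l).comp (by fun_prop)
  rw [append_singleton hl, intervalIntegral.integral_of_le zero_le_one,
    ← integral_Icc_eq_integral_Ioc, ofReal_integral_eq_lintegral_ofReal]
  · refine Integrable.of_bound hmeas.aestronglyMeasurable C (ae_of_all _ fun t => ?_)
    rw [Real.norm_of_nonneg (nonneg l _)]; exact hC _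
  · exact ae_of_all _ fun t => nonneg l _

theorem ofReal_append_eq_lintegral_pi {E : List (Fin d → ℝ)} (hE : d ≤ E.length)
    (T : List (Fin d → ℝ)) {n : ℕ} (hn : T.length = n) (x : Fin d → ℝ) :
    ENNReal.ofReal (boxSpline d (E ++ T) x) =
      ∫⁻ t, ENNReal.ofReal (boxSpline d E (x - ∑ k : Fin n, t k • T.getD k 0))
        ∂Measure.pi fun _ => volume.restrict (Set.Icc (0 : ℝ) 1) := by
  induction T using List.reverseRecOn generalizing n x with
  | nil =>
    subst hn
    simp
  | append_singleton T w ih =>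
    obtain rfl : n = T.length + 1 := by simpa using hn.symm
    set n := T.length
    have hsum : ∀ u : Fin (n + 1) → ℝ, ∑ k : Fin (n + 1), u k • (T ++ [w]).getD k 0 =
        ∑ k : Fin n, u k.castSucc • T.getD k 0 + u (Fin.last n) • w := by
      intro u
      rw [Fin.sum_univ_castSucc]
      congr 1
      · refine Finset.sum_congr rfl fun k _ => ?_
        rw [Fin.val_castSucc, List.getD_append _ _ _ _ k.isLt]
      · simp [n]
    let g := fun y => ENNReal.ofReal (boxSpline d E y)
    have hg : Measurable g := ENNReal.measurable_ofReal.comp (measurable E)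
    let f : ℝ × (Fin n → ℝ) → ℝ≥0∞ := fun p =>
      g (x - (∑ k : Fin n, p.2 k • T.getD k 0 + p.1 • w))
    have hf : Measurable f := hg.comp (by fun_prop)
    have hmp := measurePreserving_piFinSuccAbove
      (fun _ : Fin (n + 1) => volume.restrict (Set.Icc (0 : ℝ) 1)) (Fin.last n)
    rw [← List.append_assoc]
    calc ENNReal.ofReal (boxSpline d (E ++ T ++ [w]) x)
        = ∫⁻ s in Set.Icc (0 : ℝ) 1, ∫⁻ t, g (x - s • w - ∑ k : Fin n, t k • T.getD k 0)
            ∂Measure.pi fun _ => volume.restrict (Set.Icc (0 : ℝ) 1) := by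
          rw [ofReal_append_singleton (by simp only [List.length_append]; omega)]
          exact lintegral_congr fun s => ih rfl _
      _ = ∫⁻ p, f p ∂(volume.restrict (Set.Icc (0 : ℝ) 1)).prod
            (Measure.pi fun _ => volume.restrict (Set.Icc (0 : ℝ) 1)) := by
          rw [lintegral_prod _ hf.aemeasurable]
          simp only [f, sub_add_eq_sub_sub_swap]
      _ = _ := by
          rw [← hmp.lintegral_comp hf]
          refine lintegral_congr fun u => ?_
          rw [hsum]
          simp [f, g, Fin.init]

theorem ofReal_append_eq_lintegral_mul_of_length_eq {E F : List (Fin d → ℝ)} (hE : d ≤ E.length)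
    (hF : F.length = d) (hliF : LinearIndependent ℝ fun i : Fin d => F.getD i.val 0)
    (x : Fin d → ℝ) :
    ENNReal.ofReal (boxSpline d (E ++ F) x) =
      ∫⁻ y, ENNReal.ofReal (boxSpline d E (x - y)) * ENNReal.ofReal (boxSpline d F y) := by
  set b := fun i : Fin d => F.getD i.val 0
  set c := |(Matrix.of fun i j : Fin d => F.getD j.val 0 i).det|
  have hc : c ≠ 0 := abs_ne_zero.2
    ((Matrix.linearIndependent_cols_iff_isUnit.1 hliF).map Matrix.detMonoidHom).ne_zero
  let g := fun y => ENNReal.ofReal (boxSpline d E (x - y))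
  have hP := (isCompact_parallelepiped b).measurableSet
  calc ENNReal.ofReal (boxSpline d (E ++ F) x)
      = ∫⁻ t in Set.Icc (0 : Fin d → ℝ) 1, g (∑ k, t k • b k) := by
        rw [ofReal_append_eq_lintegral_pi hE F hF, ← Measure.pi_volume_restrict_Icc]
        rfl
    _ = (∫⁻ y in parallelepiped b, g y) * ENNReal.ofReal c⁻¹ := by
        rw [setLIntegral_parallelepiped hliF, mul_comm, ← mul_assoc, ← ENNReal.ofReal_mul
          (inv_nonneg.2 (abs_nonneg _)), inv_mul_cancel₀ hc, ENNReal.ofReal_one, one_mul]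
    _ = ∫⁻ y, g y * ENNReal.ofReal (boxSpline d F y) := by
        rw [← lintegral_mul_const' _ _ ENNReal.ofReal_ne_top, ← lintegral_indicator hP,
          of_length_le hF.le]
        refine lintegral_congr fun y => ?_
        classical
        simp only [Set.indicator_apply]
        split_ifs <;> simp [c]

theorem lintegral_mul_append_singleton (E : List (Fin d → ℝ)) {F : List (Fin d → ℝ)}
    (hF : d ≤ F.length) (w x : Fin d → ℝ) :
    ∫⁻ y, ENNReal.ofReal (boxSpline d E (x - y)) * ENNReal.ofReal (boxSpline d (F ++ [w]) y) =
      ∫⁻ s in Set.Icc (0 : ℝ) 1, ∫⁻ y,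
        ENNReal.ofReal (boxSpline d E (x - s • w - y)) * ENNReal.ofReal (boxSpline d F y) := by
  let g := fun y => ENNReal.ofReal (boxSpline d E y)
  let h := fun y => ENNReal.ofReal (boxSpline d F y)
  have hg : Measurable g := ENNReal.measurable_ofReal.comp (measurable E)
  have hh : Measurable h := ENNReal.measurable_ofReal.comp (measurable F)
  calc ∫⁻ y, g (x - y) * ENNReal.ofReal (boxSpline d (F ++ [w]) y)
      = ∫⁻ y, ∫⁻ s in Set.Icc (0 : ℝ) 1, g (x - y) * h (y - s • w) := by
        refine lintegral_congr fun y => ?_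
        rw [ofReal_append_singleton hF]
        exact (lintegral_const_mul _ (hh.comp (by fun_prop))).symm
    _ = ∫⁻ s in Set.Icc (0 : ℝ) 1, ∫⁻ y, g (x - y) * h (y - s • w) :=
        lintegral_lintegral_swap ((hg.comp (by fun_prop)).mul (hh.comp (by fun_prop))).aemeasurable
    _ = ∫⁻ s in Set.Icc (0 : ℝ) 1, ∫⁻ y, g (x - s • w - y) * h y := by
        refine lintegral_congr fun s => ?_
        rw [← lintegral_add_right_eq_self _ (s • w)]
        simp only [sub_add_eq_sub_sub_swap, add_sub_cancel_right]

theorem ofReal_append_eq_lintegral_mul {E F : List (Fin d → ℝ)} (hE : d ≤ E.length)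
    (hF : d ≤ F.length) (hliF : LinearIndependent ℝ fun i : Fin d => F.getD i.val 0)
    (x : Fin d → ℝ) :
    ENNReal.ofReal (boxSpline d (E ++ F) x) =
      ∫⁻ y, ENNReal.ofReal (boxSpline d E (x - y)) * ENNReal.ofReal (boxSpline d F y) := by
  induction F using List.induction_of_length_le d generalizing x with
  | short F hF' => exact ofReal_append_eq_lintegral_mul_of_length_eq hE (by omega) hliF x
  | append_singleton F w hF' ih =>
    have hliF' : LinearIndependent ℝ fun i : Fin d => F.getD i.val 0 := by
      simpa only [List.getD_append _ _ _ _ (Nat.lt_of_lt_of_le (Fin.is_lt _) hF')] using hliF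
    rw [lintegral_mul_append_singleton E hF', ← List.append_assoc,
      ofReal_append_singleton (by simp only [List.length_append]; omega)]
    exact lintegral_congr fun s => by rw [ih hF' hliF']

end boxSpline

theorem boxSpline_append_eq_convolution_general
    (d : ℕ)
    (E F : List (Fin d → ℝ)) (hE : d ≤ E.length) (hF : d ≤ F.length)
    (hliF : LinearIndependent ℝ (fun i : Fin d => F.getD i.val 0)) :
    ∀ᵐ x : Fin d → ℝ ∂volume,
      boxSpline d (E ++ F) x = ∫ y, boxSpline d E (x - y) * boxSpline d F y := by
  refine ae_of_all _ fun x => ?_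
  have hmeas : Measurable fun y => boxSpline d E (x - y) * boxSpline d F y :=
    ((boxSpline.measurable E).comp (by fun_prop)).mul (boxSpline.measurable F)
  rw [integral_eq_lintegral_of_nonneg_ae
      (ae_of_all _ fun y => mul_nonneg (boxSpline.nonneg E _) (boxSpline.nonneg F y))
      hmeas.aestronglyMeasurable]
  simp_rw [ENNReal.ofReal_mul (boxSpline.nonneg E _)]
  rw [← boxSpline.ofReal_append_eq_lintegral_mul hE hF hliF x,
    ENNReal.toReal_ofReal (boxSpline.nonneg _ x)]

/-- The box spline of a concatenated list `E ++ F` equals the convolution of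
the two box splines: for Lebesgue-a.e. `x`, `M_{E++F}(x) = ∫ M_E(x − y) M_F(y) dy`. -/
theorem boxSpline_append_eq_convolution
    (d : ℕ) (hd : 1 ≤ d)
    (E F : List (Fin d → ℝ)) (hE : d ≤ E.length) (hF : d ≤ F.length)
    (hliE : LinearIndependent ℝ (fun i : Fin d => E.getD i.val 0))
    (hliF : LinearIndependent ℝ (fun i : Fin d => F.getD i.val 0)) :
    ∀ᵐ x : Fin d → ℝ ∂volume,
      boxSpline d (E ++ F) x = ∫ y, boxSpline d E (x - y) * boxSpline d F y :=
  boxSpline_append_eq_convolution_general d E F hE hF hliF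
end

section
/- Let B : ℝ^d → ℝ be Lebesgue integrable with compact support and with ∫_{ℝ^d} B(y) dy = 1, and let n ∈ ℕ. Then for every real polynomial Q in d variables of total degree at most n there exists a unique real polynomial P in d variables of total degree at most n such that for every x ∈ ℝ^d, ∫_{ℝ^d} B(y) · P(x − y) dy = Q(x). In particular, the space spanned by the mollified functions B * p, for p ranging over polynomials of total degree at most n, contains all polynomials of total degree at most n. -/
/-!
Expand `P(x - y)` as a polynomial in `x` with coefficients in `ℝ[y]`. Its total degree in `(x, y)`
jointly is at most `deg P`, so the coefficients of the monomials `x^m` with `|m| ≥ deg P` are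
constants, and setting `y = 0` shows they are the coefficients of `P`. Integrating against `B`,
the mollification of `P` is `(∫ B) • P` plus terms of lower degree. So mollification is an
injective linear endomorphism of the finite-dimensional space of polynomials of degree at most
`n`, hence bijective.
-/

open MeasureTheory

namespace MvPolynomial

variable {R σ τ : Type*}

section JointDegree

variable [CommSemiring R]

/-- Polynomials whose total degree in the variables `σ ⊕ τ` jointly is at most `k`. -/
def jointDegreeLE (k : ℕ) : Submodule R (MvPolynomial σ (MvPolynomial τ R)) where
  carrier := {f | ∀ m, ∀ b ∈ (f.coeff m).support, m.degree + b.degree ≤ k}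
  add_mem' {f g} hf hg m b hb := by
    classical
    rw [coeff_add] at hb
    rcases Finset.mem_union.mp (support_add hb) with hb | hb
    exacts [hf m b hb, hg m b hb]
  zero_mem' m b hb := by simp at hb
  smul_mem' r f hf m b hb := hf m b (support_smul (by rwa [coeff_smul] at hb))

theorem jointDegreeLE_mono {k l : ℕ} (h : k ≤ l) :
    (jointDegreeLE k : Submodule R (MvPolynomial σ (MvPolynomial τ R))) ≤ jointDegreeLE l :=
  fun _ hf m b hb => (hf m b hb).trans h

theorem mul_mem_jointDegreeLE {k l : ℕ} {f g : MvPolynomial σ (MvPolynomial τ R)}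
    (hf : f ∈ jointDegreeLE k) (hg : g ∈ jointDegreeLE l) : f * g ∈ jointDegreeLE (k + l) := by
  classical
  intro m b hb
  rw [coeff_mul] at hb
  obtain ⟨⟨u, v⟩, huv, hb⟩ := Finset.mem_biUnion.mp (support_sum hb)
  obtain ⟨b₁, hb₁, b₂, hb₂, rfl⟩ := Finset.mem_add.mp (support_mul _ _ hb)
  obtain rfl : u + v = m := Finset.HasAntidiagonal.mem_antidiagonal.mp huv
  have := hf u b₁ hb₁
  have := hg v b₂ hb₂
  simp only [map_add]
  omega

theorem monomial_monomial_mem_jointDegreeLE (m : σ →₀ ℕ) (b : τ →₀ ℕ) (r : R) :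
    monomial m (monomial b r) ∈ jointDegreeLE (m.degree + b.degree) := by
  classical
  intro m' b' hb'
  rw [coeff_monomial] at hb'
  split_ifs at hb' with hm
  · rw [Finset.mem_singleton.mp (support_monomial_subset hb'), hm]
  · simp at hb'

theorem one_mem_jointDegreeLE :
    (1 : MvPolynomial σ (MvPolynomial τ R)) ∈ jointDegreeLE 0 := by
  simpa using monomial_monomial_mem_jointDegreeLE (σ := σ) (τ := τ) 0 0 (1 : R)

theorem pow_mem_jointDegreeLE {k : ℕ} {f : MvPolynomial σ (MvPolynomial τ R)}
    (hf : f ∈ jointDegreeLE k) (n : ℕ) : f ^ n ∈ jointDegreeLE (n * k) := by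
  induction n with
  | zero => simpa using one_mem_jointDegreeLE
  | succ n ih => simpa [pow_succ, Nat.succ_mul] using mul_mem_jointDegreeLE ih hf

theorem prod_mem_jointDegreeLE {ι : Type*} (s : Finset ι)
    {f : ι → MvPolynomial σ (MvPolynomial τ R)} {k : ι → ℕ}
    (h : ∀ i ∈ s, f i ∈ jointDegreeLE (k i)) :
    ∏ i ∈ s, f i ∈ jointDegreeLE (∑ i ∈ s, k i) := by
  classical
  induction s using Finset.induction_on with
  | empty => simpa using one_mem_jointDegreeLE
  | insert a s ha ih =>
    rw [Finset.prod_insert ha, Finset.sum_insert ha]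
    exact mul_mem_jointDegreeLE (h a (by simp)) (ih fun i hi => h i (by simp [hi]))

theorem X_mem_jointDegreeLE (i : σ) :
    (X i : MvPolynomial σ (MvPolynomial τ R)) ∈ jointDegreeLE 1 := by
  simpa [X] using monomial_monomial_mem_jointDegreeLE (τ := τ) (Finsupp.single i 1) 0 (1 : R)

theorem C_X_mem_jointDegreeLE (j : τ) :
    (C (X j) : MvPolynomial σ (MvPolynomial τ R)) ∈ jointDegreeLE 1 := by
  simpa [X] using monomial_monomial_mem_jointDegreeLE (σ := σ) 0 (Finsupp.single j 1) (1 : R)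

end JointDegree

section Translate

variable [CommRing R]

/-- `P(X - Y)`, as a polynomial in `X` with coefficients in `R[Y]`. -/
noncomputable def translate : MvPolynomial σ R →ₐ[R] MvPolynomial σ (MvPolynomial σ R) :=
  aeval fun i => X i - C (X i)

theorem eval_map_eval_translate (P : MvPolynomial σ R) (x y : σ → R) :
    eval x (map (eval y) (translate P)) = eval (x - y) P := by
  induction P using MvPolynomial.induction_on with
  | C r => simp [translate]
  | add p q hp hq => simp [hp, hq]
  | mul_X p i hp =>
    simp only [map_mul, hp]
    simp [translate]

theorem map_constantCoeff_translate (P : MvPolynomial σ R) :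
    map constantCoeff (translate P) = P := by
  induction P using MvPolynomial.induction_on with
  | C r => simp [translate]
  | add p q hp hq => simp [hp, hq]
  | mul_X p i hp =>
    simp only [map_mul, hp]
    simp [translate]

theorem translate_mem_jointDegreeLE (P : MvPolynomial σ R) :
    translate P ∈ jointDegreeLE P.totalDegree := by
  have hP : translate P = ∑ a ∈ P.support, translate (monomial a (P.coeff a)) := by
    rw [← map_sum, support_sum_monomial_coeff]
  rw [hP]
  refine Submodule.sum_mem _ fun a ha => jointDegreeLE_mono (le_totalDegree ha) ?_
  rw [translate, aeval_monomial, ← Algebra.smul_def]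
  refine Submodule.smul_mem _ _ ?_
  unfold Finsupp.prod Finsupp.sum
  have hX_sub_C_X (i : σ) : X i - C (X i) ∈ jointDegreeLE (R := R) (σ := σ) (τ := σ) 1 :=
    sub_mem (X_mem_jointDegreeLE i) (C_X_mem_jointDegreeLE i)
  simpa using prod_mem_jointDegreeLE a.support fun i _ => pow_mem_jointDegreeLE (hX_sub_C_X i) (a i)

theorem coeff_translate_of_totalDegree_le {P : MvPolynomial σ R} {m : σ →₀ ℕ}
    (h : P.totalDegree ≤ m.degree) : (translate P).coeff m = C (P.coeff m) := by
  have hconst : ((translate P).coeff m).totalDegree = 0 := by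
    refine Nat.eq_zero_of_le_zero (Finset.sup_le fun b hb => ?_)
    have := translate_mem_jointDegreeLE P m b hb
    change b.degree ≤ 0
    omega
  conv_rhs => rw [← map_constantCoeff_translate P, coeff_map]
  exact totalDegree_eq_zero_iff_eq_C.mp hconst

end Translate

section Mollify

variable {μ : Measure (σ → ℝ)} {B : (σ → ℝ) → ℝ}

/-- The polynomial `x ↦ ∫ B(y) P(x - y) dμ(y)` (see `eval_mollify`). -/
noncomputable def mollify (μ : Measure (σ → ℝ)) (B : (σ → ℝ) → ℝ) (P : MvPolynomial σ ℝ) :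
    MvPolynomial σ ℝ :=
  ∑ m ∈ (translate P).support, monomial m (∫ y, B y * eval y ((translate P).coeff m) ∂μ)

theorem coeff_mollify (P : MvPolynomial σ ℝ) (m : σ →₀ ℕ) :
    (mollify μ B P).coeff m = ∫ y, B y * eval y ((translate P).coeff m) ∂μ := by
  classical
  rw [mollify, coeff_sum]
  simp only [coeff_monomial]
  rw [Finset.sum_ite_eq']
  split_ifs with hm
  · rfl
  · simp [notMem_support_iff.mp hm]

theorem totalDegree_mollify_le (P : MvPolynomial σ ℝ) :
    (mollify μ B P).totalDegree ≤ P.totalDegree := by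
  refine totalDegree_finsetSum_le fun m hm => (totalDegree_monomial_le _ _).trans ?_
  obtain ⟨b, hb⟩ := support_nonempty.mpr (mem_support_iff.mp hm)
  exact le_of_add_le_left (translate_mem_jointDegreeLE P m b hb)

theorem coeff_mollify_of_totalDegree_le {P : MvPolynomial σ ℝ} {m : σ →₀ ℕ}
    (h : P.totalDegree ≤ m.degree) : (mollify μ B P).coeff m = (∫ y, B y ∂μ) * P.coeff m := by
  simp [coeff_mollify, coeff_translate_of_totalDegree_le h, integral_mul_const]

theorem mollify_ne_zero (hB : ∫ y, B y ∂μ ≠ 0) {P : MvPolynomial σ ℝ} (hP : P ≠ 0) :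
    mollify μ B P ≠ 0 := by
  obtain ⟨m, hm, hdeg⟩ := Finset.exists_mem_eq_sup P.support (support_nonempty.mpr hP)
    fun s => s.degree
  intro h
  have := coeff_mollify_of_totalDegree_le (μ := μ) (B := B) hdeg.le
  rw [h, coeff_zero] at this
  exact mul_ne_zero hB (mem_support_iff.mp hm) this.symm

theorem integrable_mul_eval [Finite σ] (hB : Integrable B μ) (hBc : HasCompactSupport B)
    (P : MvPolynomial σ ℝ) : Integrable (fun y => B y * eval y P) μ :=
  IntegrableOn.integrable_of_forall_notMem_eq_zero
    (hB.integrableOn.mul_continuousOn (continuous_eval P).continuousOn hBc)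
    fun y hy => by simp [image_eq_zero_of_notMem_tsupport hy]

theorem eval_mollify [Finite σ] (hB : Integrable B μ) (hBc : HasCompactSupport B)
    (P : MvPolynomial σ ℝ) (x : σ → ℝ) :
    eval x (mollify μ B P) = ∫ y, B y * eval (x - y) P ∂μ := by
  have hexpand (y : σ → ℝ) : eval (x - y) P = ∑ m ∈ (translate P).support,
      eval y ((translate P).coeff m) * ∏ i ∈ m.support, x i ^ m i := by
    rw [← eval_map_eval_translate, eval_map, eval₂_eq]
  simp_rw [hexpand, Finset.mul_sum, mollify, map_sum, eval_monomial, Finsupp.prod]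
  rw [integral_finsetSum _ fun m _ => ?_]
  · refine Finset.sum_congr rfl fun m _ => ?_
    simp_rw [← mul_assoc, integral_mul_const]
  · simp_rw [← mul_assoc]
    exact (integrable_mul_eval hB hBc _).mul_const _

variable [Finite σ]

noncomputable def mollifyₗ (hB : Integrable B μ) (hBc : HasCompactSupport B) :
    MvPolynomial σ ℝ →ₗ[ℝ] MvPolynomial σ ℝ where
  toFun := mollify μ B
  map_add' P Q := by
    ext m
    simp only [coeff_add, coeff_mollify, map_add, mul_add]
    exact integral_add (integrable_mul_eval hB hBc _) (integrable_mul_eval hB hBc _)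
  map_smul' c P := by
    ext m
    simp only [coeff_smul, coeff_mollify, map_smul, smul_eval, smul_eq_mul, RingHom.id_apply,
      mul_left_comm (B _), integral_const_mul]

theorem mollifyₗ_injective (hB : Integrable B μ) (hBc : HasCompactSupport B)
    (hB₀ : ∫ y, B y ∂μ ≠ 0) : Function.Injective (mollifyₗ hB hBc) :=
  (injective_iff_map_eq_zero _).mpr fun _ hP => by_contra fun h => mollify_ne_zero hB₀ h hP

theorem exists_totalDegree_le_mollify_eq (hB : Integrable B μ) (hBc : HasCompactSupport B)
    (hB₀ : ∫ y, B y ∂μ ≠ 0) {n : ℕ} {Q : MvPolynomial σ ℝ} (hQ : Q.totalDegree ≤ n) :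
    ∃ P : MvPolynomial σ ℝ, P.totalDegree ≤ n ∧ mollify μ B P = Q := by
  let T := (mollifyₗ hB hBc).restrict (p := restrictTotalDegree σ ℝ n)
    (q := restrictTotalDegree σ ℝ n) fun P hP => (mem_restrictTotalDegree _ _ _).mpr
      ((totalDegree_mollify_le P).trans ((mem_restrictTotalDegree _ _ _).mp hP))
  have hT : Function.Injective T := fun P P' h =>
    Subtype.ext (mollifyₗ_injective hB hBc hB₀ (congrArg Subtype.val h))
  obtain ⟨⟨P, hP⟩, hPQ⟩ :=
    LinearMap.surjective_of_injective hT ⟨Q, (mem_restrictTotalDegree _ _ _).mpr hQ⟩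
  exact ⟨P, (mem_restrictTotalDegree _ _ _).mp hP, congrArg Subtype.val hPQ⟩

end Mollify

end MvPolynomial

/-- If moreover `∫ B = 1`, then for every polynomial `Q` of total degree at
most `n` there is a unique polynomial `P` of total degree at most `n` with
`∫ B(y) P(x − y) dy = Q(x)` for all `x`; in particular, every polynomial of total degree
at most `n` lies in the span of the mollified functions `B * p` for `p` of total degree
at most `n`. -/
theorem mollification_bijective_on_polynomials
    (d n : ℕ) (B : (Fin d → ℝ) → ℝ)
    (hB : Integrable B) (hBc : HasCompactSupport B)
    (hB1 : ∫ y, B y = 1) :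
    (∀ Q : MvPolynomial (Fin d) ℝ, Q.totalDegree ≤ n →
      ∃! P : MvPolynomial (Fin d) ℝ, P.totalDegree ≤ n ∧
        ∀ x : Fin d → ℝ,
          ∫ y, B y * MvPolynomial.eval (x - y) P = MvPolynomial.eval x Q) ∧
    (∀ Q : MvPolynomial (Fin d) ℝ, Q.totalDegree ≤ n →
      (fun x : Fin d → ℝ => MvPolynomial.eval x Q) ∈
        Submodule.span ℝ
          {h : (Fin d → ℝ) → ℝ | ∃ p : MvPolynomial (Fin d) ℝ, p.totalDegree ≤ n ∧
            h = fun x => ∫ y, B y * MvPolynomial.eval (x - y) p}) := by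
  have hB₀ : ∫ y, B y ≠ 0 := hB1 ▸ one_ne_zero
  have hsolves (P Q : MvPolynomial (Fin d) ℝ) :
      (∀ x, ∫ y, B y * MvPolynomial.eval (x - y) P = MvPolynomial.eval x Q) ↔
        MvPolynomial.mollify volume B P = Q := by
    simp only [← MvPolynomial.eval_mollify hB hBc]
    exact ⟨MvPolynomial.funext, fun h x => by rw [h]⟩
  have hunique (Q : MvPolynomial (Fin d) ℝ) (hQ : Q.totalDegree ≤ n) :
      ∃! P : MvPolynomial (Fin d) ℝ, P.totalDegree ≤ n ∧
        ∀ x, ∫ y, B y * MvPolynomial.eval (x - y) P = MvPolynomial.eval x Q := by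
    simp only [hsolves]
    obtain ⟨P, hPn, hPQ⟩ := MvPolynomial.exists_totalDegree_le_mollify_eq hB hBc hB₀ hQ
    exact ⟨P, ⟨hPn, hPQ⟩, fun P' ⟨_, hP'Q⟩ =>
      MvPolynomial.mollifyₗ_injective hB hBc hB₀ (hP'Q.trans hPQ.symm)⟩
  refine ⟨hunique, fun Q hQ => ?_⟩
  obtain ⟨P, ⟨hPn, hPQ⟩, -⟩ := hunique Q hQ
  exact Submodule.subset_span ⟨P, hPn, funext fun x => (hPQ x).symm⟩
end
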